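/- Under Assumption 1, for any initial distribution p₀ ∈ P(𝓜) and any mutant distribution q ∈ P(𝓜): if p*({M}) = 0, then (p_i)_{i≥0} converges in total variation to p*. -/

import Mathlib

open MeasureTheory Set Filter

/-- Selective advantage `s(x,u) = w(x,u) / ∫ w(y,u) u(dy)` if the mean fitness is
positive, and `1` otherwise. -/
noncomputable def sel (w : ℝ → MeasureTheory.Measure ℝ → ℝ)
    (u : MeasureTheory.Measure ℝ) (x : ℝ) : ℝ :=
  if 0 < ∫ y, w y u ∂u then w x u / ∫ y, w y u ∂u else 1

/-- The sequence of type distributions: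
`p_i(dx) = (1-β) s(x,p_{i-1}) p_{i-1}(dx) + β q(dx)`. -/
noncomputable def evol (w : ℝ → MeasureTheory.Measure ℝ → ℝ) (β : ℝ)
    (q p₀ : MeasureTheory.Measure ℝ) : ℕ → MeasureTheory.Measure ℝ
  | 0 => p₀
  | i + 1 =>
      ENNReal.ofReal (1 - β) •
          ((evol w β q p₀ i).withDensity fun x =>
            ENNReal.ofReal (sel w (evol w β q p₀ i) x))
        + ENNReal.ofReal β • q

/-- Convergence in total variation (uniform convergence over all measurable sets). -/
def TendstoTV (p : ℕ → MeasureTheory.Measure ℝ) (μ : MeasureTheory.Measure ℝ) : Prop :=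
  ∀ ε : ℝ, 0 < ε → ∃ N : ℕ, ∀ i ≥ N, ∀ A : Set ℝ, MeasurableSet A →
    |((p i) A).toReal - (μ A).toReal| < ε

/-- Weak convergence of measures (tested against bounded continuous functions). -/
def TendstoWeak (p : ℕ → MeasureTheory.Measure ℝ) (μ : MeasureTheory.Measure ℝ) : Prop :=
  ∀ f : BoundedContinuousFunction ℝ ℝ,
    Filter.Tendsto (fun i => ∫ x, f x ∂(p i)) Filter.atTop (nhds (∫ x, f x ∂μ))

/-- Assumption 1: if `v` restricted to `[0,M)` is a component of `u` restricted to `[0,M)`,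
then `s(·,u) ≥ s(·,v)` on `[0,M]`. -/
def Assumption1 (M : ℝ) (w : ℝ → MeasureTheory.Measure ℝ → ℝ) : Prop :=
  ∀ u v : MeasureTheory.Measure ℝ,
    IsProbabilityMeasure u → IsProbabilityMeasure v →
    u ((Set.Icc 0 M)ᶜ) = 0 → v ((Set.Icc 0 M)ᶜ) = 0 →
    v.restrict (Set.Ico 0 M) ≤ u.restrict (Set.Ico 0 M) →
    ∀ x ∈ Set.Icc (0:ℝ) M, sel w v x ≤ sel w u x

/-- Assumption 2: for every `0 ≤ a < M` and `0 < ε < 1` there is `c(a,ε) > 1` such that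
`s(M,u) ≥ c(a,ε) s(M,v)` whenever `v_{[0,M)} ≺ u_{[0,M)}` and `D_u(a) ≥ D_v(a) + ε`. -/
def Assumption2 (M : ℝ) (w : ℝ → MeasureTheory.Measure ℝ → ℝ) : Prop :=
  ∀ a : ℝ, 0 ≤ a → a < M → ∀ ε : ℝ, 0 < ε → ε < 1 → ∃ c : ℝ, 1 < c ∧
    ∀ u v : MeasureTheory.Measure ℝ,
      IsProbabilityMeasure u → IsProbabilityMeasure v →
      u ((Set.Icc 0 M)ᶜ) = 0 → v ((Set.Icc 0 M)ᶜ) = 0 →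
      v.restrict (Set.Ico 0 M) ≤ u.restrict (Set.Ico 0 M) →
      (v (Set.Icc 0 a)).toReal + ε ≤ (u (Set.Icc 0 a)).toReal →
      c * sel w v M ≤ sel w u M

/-! Started from `δ_M`, the population has no mass on `[0,M)`, so by Assumption 1 and induction
the restriction of `p̂_i` to `[0,M)` stays dominated by that of `p_i`. Two probability measures
ordered on `[0,M)` are within the smaller one's mass outside `[0,M)` of each other on every set;
for `p̂_i` that mass is `p̂_i({M})`, which tends to `p*({M}) = 0`. -/

open scoped ENNReal

section

variable {α : Type*} [MeasurableSpace α]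

lemma restrict_withDensity_le_restrict_withDensity {μ ν : Measure α} {S : Set α}
    {f g : α → ℝ≥0∞} (hS : MeasurableSet S) (hμν : μ.restrict S ≤ ν.restrict S)
    (hfg : ∀ x ∈ S, f x ≤ g x) :
    (μ.withDensity f).restrict S ≤ (ν.withDensity g).restrict S := by
  rw [restrict_withDensity hS, restrict_withDensity hS]
  calc (μ.restrict S).withDensity f ≤ (μ.restrict S).withDensity g :=
        withDensity_mono ((ae_restrict_iff' hS).2 (.of_forall hfg))
    _ ≤ (ν.restrict S).withDensity g := Measure.le_iff.2 fun B hB => by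
        rw [withDensity_apply _ hB, withDensity_apply _ hB]
        exact lintegral_mono' (Measure.restrict_mono subset_rfl hμν) le_rfl

lemma abs_measureReal_sub_le_of_restrict_le {μ ν : Measure α}
    [IsProbabilityMeasure μ] [IsProbabilityMeasure ν] {S A : Set α} (hS : MeasurableSet S)
    (hνμ : ν.restrict S ≤ μ.restrict S) (hA : MeasurableSet A) :
    |μ.real A - ν.real A| ≤ ν.real Sᶜ := by
  have hle : ∀ B ⊆ S, ν.real B ≤ μ.real B := fun B hB => by
    simpa only [Measure.real, Measure.restrict_apply' hS, inter_eq_left.2 hB] using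
      ENNReal.toReal_mono (measure_ne_top _ _) (Measure.le_iff'.1 hνμ B)
  have hsplit : ∀ ρ : Measure α, [IsProbabilityMeasure ρ] →
      ρ.real A = ρ.real (S ∩ A) + ρ.real (A \ S) ∧
      ρ.real S = ρ.real (S ∩ A) + ρ.real (S \ A) ∧
      ρ.real Sᶜ = 1 - ρ.real S ∧ ρ.real (A \ S) ≤ ρ.real Sᶜ := fun ρ _ => by
    refine ⟨?_, (measureReal_inter_add_sdiff hA).symm, by rw [measureReal_compl hS, probReal_univ],
      measureReal_mono (sdiff_subset_compl _ _)⟩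
    rw [inter_comm, measureReal_inter_add_sdiff hS]
  obtain ⟨hμA, hμS, hμSc, hμAS⟩ := hsplit μ
  obtain ⟨hνA, hνS, hνSc, hνAS⟩ := hsplit ν
  have hin := hle _ (inter_subset_left (t := A))
  have hout := hle _ (sdiff_subset (t := A))
  rw [abs_le]
  constructor <;>
    linarith [measureReal_nonneg (μ := μ) (s := A \ S), measureReal_nonneg (μ := ν) (s := A \ S)]

end

lemma lintegral_ofReal_sel {w : ℝ → Measure ℝ → ℝ} (hw : ∀ x u, 0 ≤ w x u)
    (u : Measure ℝ) [IsProbabilityMeasure u] :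
    ∫⁻ x, ENNReal.ofReal (sel w u x) ∂u = 1 := by
  by_cases h : 0 < ∫ y, w y u ∂u
  · have hint : Integrable (fun y => w y u) u := by
      by_contra hint
      exact h.ne' (integral_undef hint)
    simp only [sel, if_pos h]
    rw [← ofReal_integral_eq_lintegral_ofReal (hint.div_const _)
      (.of_forall fun y => div_nonneg (hw y u) h.le), integral_div, div_self h.ne',
      ENNReal.ofReal_one]
  · simp [sel, if_neg h]

section evol

variable {w : ℝ → Measure ℝ → ℝ} {β : ℝ} {q p₀ : Measure ℝ}

lemma evol_apply_eq_zero {N : Set ℝ} (hq : q N = 0) (hp₀ : p₀ N = 0) :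
    ∀ i, evol w β q p₀ i N = 0
  | 0 => hp₀
  | i + 1 => by
    simp only [evol, Measure.add_apply, Measure.smul_apply, smul_eq_mul, hq,
      withDensity_absolutelyContinuous _ _ (evol_apply_eq_zero hq hp₀ i), mul_zero, add_zero]

lemma isProbabilityMeasure_evol (hβ₀ : 0 ≤ β) (hβ₁ : β ≤ 1) (hw : ∀ x u, 0 ≤ w x u)
    [IsProbabilityMeasure q] [IsProbabilityMeasure p₀] :
    ∀ i, IsProbabilityMeasure (evol w β q p₀ i)
  | 0 => ‹_›
  | i + 1 => by
    have := isProbabilityMeasure_evol hβ₀ hβ₁ hw i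
    constructor
    rw [evol, Measure.add_apply, Measure.smul_apply, Measure.smul_apply, smul_eq_mul, smul_eq_mul,
      withDensity_apply _ .univ, Measure.restrict_univ, lintegral_ofReal_sel hw, measure_univ,
      mul_one, mul_one, ← ENNReal.ofReal_add (by linarith) hβ₀]
    norm_num

end evol

lemma evol_restrict_Ico_mono {M β : ℝ} {w : ℝ → Measure ℝ → ℝ} {q p₀ p₀' : Measure ℝ}
    (hβ₀ : 0 ≤ β) (hβ₁ : β ≤ 1) (hw : ∀ x u, 0 ≤ w x u) (hA1 : Assumption1 M w)
    [IsProbabilityMeasure q] [IsProbabilityMeasure p₀] [IsProbabilityMeasure p₀']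
    (hq : q (Icc 0 M)ᶜ = 0) (hp₀ : p₀ (Icc 0 M)ᶜ = 0) (hp₀' : p₀' (Icc 0 M)ᶜ = 0)
    (h₀ : p₀'.restrict (Ico 0 M) ≤ p₀.restrict (Ico 0 M)) :
    ∀ i, (evol w β q p₀' i).restrict (Ico 0 M) ≤ (evol w β q p₀ i).restrict (Ico 0 M)
  | 0 => h₀
  | i + 1 => by
    have ih := evol_restrict_Ico_mono hβ₀ hβ₁ hw hA1 hq hp₀ hp₀' h₀ i
    have := isProbabilityMeasure_evol (w := w) (q := q) (p₀ := p₀) hβ₀ hβ₁ hw i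
    have := isProbabilityMeasure_evol (w := w) (q := q) (p₀ := p₀') hβ₀ hβ₁ hw i
    have hsel := hA1 _ _ ‹_› ‹_› (evol_apply_eq_zero hq hp₀ i) (evol_apply_eq_zero hq hp₀' i) ih
    simp only [evol, Measure.restrict_add, Measure.restrict_smul]
    gcongr ENNReal.ofReal (1 - β) • ?_ + _
    exact restrict_withDensity_le_restrict_withDensity measurableSet_Ico ih
      fun x hx => ENNReal.ofReal_le_ofReal (hsel x (Ico_subset_Icc_self hx))

lemma measureReal_compl_Ico_le {μ : Measure ℝ} [IsFiniteMeasure μ] {a b : ℝ}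
    (hμ : μ (Icc a b)ᶜ = 0) : μ.real (Ico a b)ᶜ ≤ μ.real {b} := by
  have hsub : (Ico a b)ᶜ ⊆ {b} ∪ (Icc a b)ᶜ := fun x hx => by
    by_cases hxb : x = b
    · exact .inl hxb
    · exact .inr fun h => hx ⟨h.1, lt_of_le_of_ne h.2 hxb⟩
  calc μ.real (Ico a b)ᶜ ≤ μ.real ({b} ∪ (Icc a b)ᶜ) := measureReal_mono hsub
    _ ≤ μ.real {b} + μ.real (Icc a b)ᶜ := measureReal_union_le _ _
    _ = μ.real {b} := by simp only [Measure.real, hμ, ENNReal.toReal_zero, add_zero]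

lemma TendstoTV.of_abs_sub_le {p p' : ℕ → Measure ℝ} {μ : Measure ℝ} [IsFiniteMeasure μ]
    {B : Set ℝ} (hp' : TendstoTV p' μ) (hB : MeasurableSet B) (hμB : μ B = 0)
    (hle : ∀ i A, MeasurableSet A → |(p i).real A - (p' i).real A| ≤ (p' i).real B) :
    TendstoTV p μ := by
  intro ε hε
  obtain ⟨N, hN⟩ := hp' (ε / 2) (by positivity)
  refine ⟨N, fun i hi A hA => ?_⟩
  have hpB : (p' i).real B < ε / 2 := by
    have h := hN i hi B hB
    rwa [hμB, ENNReal.toReal_zero, sub_zero, abs_of_nonneg ENNReal.toReal_nonneg] at h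
  have hpA : |(p' i).real A - μ.real A| < ε / 2 := hN i hi A hA
  calc |(p i).real A - μ.real A|
      ≤ |(p i).real A - (p' i).real A| + |(p' i).real A - μ.real A| := abs_sub_le _ _ _
    _ < ε := by linarith [hle i A hA]

theorem stmt8_general (M : ℝ) (hM : 0 < M) (β : ℝ) (hβ : β ∈ Set.Ioo (0:ℝ) 1)
    (q : MeasureTheory.Measure ℝ) [IsProbabilityMeasure q] (hq : q ((Set.Icc 0 M)ᶜ) = 0)
    (w : ℝ → MeasureTheory.Measure ℝ → ℝ)
    (hw_nonneg : ∀ x u, 0 ≤ w x u)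
    (hA1 : Assumption1 M w)
    (pstar : MeasureTheory.Measure ℝ) [IsProbabilityMeasure pstar]
    (hpstar : TendstoTV (evol w β q (MeasureTheory.Measure.dirac M)) pstar)
    (p₀ : MeasureTheory.Measure ℝ) [IsProbabilityMeasure p₀]
    (hp₀ : p₀ ((Set.Icc 0 M)ᶜ) = 0)
    (hM0 : pstar ({M} : Set ℝ) = 0) :
    TendstoTV (evol w β q p₀) pstar := by
  have hδ : Measure.dirac M (Icc 0 M)ᶜ = 0 := by simp [hM.le]
  have hδ₀ : (Measure.dirac M).restrict (Ico 0 M) = 0 := by simp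
  refine hpstar.of_abs_sub_le (measurableSet_singleton M) hM0 fun i A hA => ?_
  have := isProbabilityMeasure_evol (w := w) (q := q) (p₀ := p₀) hβ.1.le hβ.2.le hw_nonneg i
  have := isProbabilityMeasure_evol (w := w) (q := q) (p₀ := Measure.dirac M)
    hβ.1.le hβ.2.le hw_nonneg i
  have hcomp := evol_restrict_Ico_mono hβ.1.le hβ.2.le hw_nonneg hA1 hq hp₀ hδ
    (hδ₀ ▸ Measure.zero_le _) i
  exact (abs_measureReal_sub_le_of_restrict_le measurableSet_Ico hcomp hA).trans
    (measureReal_compl_Ico_le (evol_apply_eq_zero hq hδ i))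

/-- Corollary "nomass" of the paper. Under Assumption 1, for any `p₀`, `q`:
if `p*({M}) = 0`, then `(p_i)` converges in total variation to `p*`. -/
theorem stmt8 (M : ℝ) (hM : 0 < M) (β : ℝ) (hβ : β ∈ Set.Ioo (0:ℝ) 1)
    (q : MeasureTheory.Measure ℝ) [IsProbabilityMeasure q] (hq : q ((Set.Icc 0 M)ᶜ) = 0)
    (w : ℝ → MeasureTheory.Measure ℝ → ℝ)
    (hw_nonneg : ∀ x u, 0 ≤ w x u)
    (hw_meas : ∀ u, Measurable fun x => w x u)
    (hA1 : Assumption1 M w)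
    (pstar : MeasureTheory.Measure ℝ) [IsProbabilityMeasure pstar]
    (hpstar : TendstoTV (evol w β q (MeasureTheory.Measure.dirac M)) pstar)
    (p₀ : MeasureTheory.Measure ℝ) [IsProbabilityMeasure p₀]
    (hp₀ : p₀ ((Set.Icc 0 M)ᶜ) = 0)
    (hM0 : pstar ({M} : Set ℝ) = 0) :
    TendstoTV (evol w β q p₀) pstar :=
  stmt8_general M hM β hβ q hq w hw_nonneg hA1 pstar hpstar p₀ hp₀ hM0
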